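/- arXiv:1812.07909 — 4 statements merged into one kernel-verified Lean document; each statement's English description precedes it below -/
import Mathlib

section
/- Let P and Q be probability measures on a measurable space Ω and let f = dP/d(P+Q) be the Radon–Nikodym derivative of P with respect to P + Q. Then the discriminator D* = f minimizes the loss L(D) = ∫ (−log D) dP + ∫ (−log(1−D)) dQ over all measurable D : Ω → [0,1]; that is, for every measurable D : Ω → [0,1], L(f) ≤ L(D), with integrals valued in [0, ∞] under the conventions log 0 = −∞ and 0 · ∞ = 0. -/
/-!
With `f = dP/d(P+Q)` we have `dQ/d(P+Q) = 1 - f`, so the loss of a measurable `D` is the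
`(P+Q)`-integral of the binary cross-entropy `f·(-log D) + (1-f)·(-log(1-D))`. Pointwise this is
minimised at `D = f`: that is Gibbs' inequality for two-point distributions, which follows from
`a log b ≤ a log a + (b - a)`, i.e. from `log x ≤ x - 1`.
-/

open MeasureTheory ENNReal

/-- `-log x` for `x ∈ [0,1] ⊆ ℝ≥0∞`, valued in `[0, ∞]`, with the convention
`log 0 = -∞`, i.e. `-log 0 = ∞`. -/
noncomputable def negLog (x : ℝ≥0∞) : ℝ≥0∞ :=
  if x = 0 then ∞ else ENNReal.ofReal (-Real.log x.toReal)

namespace Real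

lemma mul_log_le_mul_log_add_sub {a b : ℝ} (ha : 0 ≤ a) (hb : 0 < b) :
    a * log b ≤ a * log a + (b - a) := by
  rcases ha.eq_or_lt with rfl | ha
  · simpa using hb.le
  have h := mul_le_mul_of_nonneg_left (log_le_sub_one_of_pos (div_pos hb ha)) ha.le
  rw [log_div hb.ne' ha.ne', mul_sub_one, mul_div_cancel₀ b ha.ne'] at h
  linarith

lemma binEntropy_le_mul_log_inv_add_mul_log_inv {p q : ℝ} (hp₀ : 0 ≤ p) (hp₁ : p ≤ 1)
    (hq₀ : 0 < q) (hq₁ : q < 1) :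
    binEntropy p ≤ p * log q⁻¹ + (1 - p) * log (1 - q)⁻¹ := by
  have h := mul_log_le_mul_log_add_sub hp₀ hq₀
  have h' := mul_log_le_mul_log_add_sub (sub_nonneg.2 hp₁) (sub_pos.2 hq₁)
  simp only [binEntropy, log_inv]
  linarith

end Real

@[fun_prop]
lemma measurable_negLog : Measurable negLog :=
  Measurable.ite (measurableSet_singleton 0) measurable_const (by fun_prop)

@[simp]
lemma negLog_zero : negLog 0 = ∞ := if_pos rfl

@[simp]
lemma negLog_one : negLog 1 = 0 := by simp [negLog]

lemma negLog_ofReal {q : ℝ} (hq : 0 < q) :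
    negLog (ENNReal.ofReal q) = ENNReal.ofReal (Real.log q⁻¹) := by
  simp [negLog, hq, hq.le, Real.log_inv]

noncomputable def binCrossEntropy (a d : ℝ≥0∞) : ℝ≥0∞ :=
  a * negLog d + (1 - a) * negLog (1 - d)

lemma binCrossEntropy_ofReal {p q : ℝ} (hp₀ : 0 ≤ p) (hp₁ : p ≤ 1) (hq₀ : 0 < q)
    (hq₁ : q < 1) :
    binCrossEntropy (ENNReal.ofReal p) (ENNReal.ofReal q)
      = ENNReal.ofReal (p * Real.log q⁻¹ + (1 - p) * Real.log (1 - q)⁻¹) := by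
  have hlog {x : ℝ} (hx₀ : 0 < x) (hx₁ : x ≤ 1) : 0 ≤ Real.log x⁻¹ :=
    Real.log_nonneg ((one_le_inv₀ hx₀).2 hx₁)
  have hsub {x : ℝ} (hx : 0 ≤ x) : 1 - ENNReal.ofReal x = ENNReal.ofReal (1 - x) := by
    rw [ENNReal.ofReal_sub 1 hx, ENNReal.ofReal_one]
  have hq₁' : 0 < 1 - q := sub_pos.2 hq₁
  rw [binCrossEntropy, hsub hp₀, hsub hq₀.le, negLog_ofReal hq₀, negLog_ofReal hq₁',
    ENNReal.ofReal_add (mul_nonneg hp₀ (hlog hq₀ hq₁.le))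
      (mul_nonneg (sub_nonneg.2 hp₁) (hlog hq₁' (by linarith))),
    ENNReal.ofReal_mul hp₀, ENNReal.ofReal_mul (sub_nonneg.2 hp₁)]

lemma binCrossEntropy_self_le {a : ℝ≥0∞} (ha : a ≤ 1) (d : ℝ≥0∞) :
    binCrossEntropy a a ≤ binCrossEntropy a d := by
  rcases eq_or_ne a 0 with rfl | ha₀
  · simp [binCrossEntropy]
  rcases ha.eq_or_lt with rfl | ha₁
  · simp [binCrossEntropy]
  rcases eq_or_ne d 0 with rfl | hd₀
  · simp [binCrossEntropy, ENNReal.mul_top ha₀]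
  rcases le_or_gt 1 d with hd₁ | hd₁
  · simp [binCrossEntropy, tsub_eq_zero_of_le hd₁, ENNReal.mul_top (tsub_pos_of_lt ha₁).ne']
  obtain ⟨p, hp₀, hp₁, rfl⟩ : ∃ p : ℝ, 0 < p ∧ p < 1 ∧ a = ENNReal.ofReal p :=
    ⟨a.toReal, toReal_pos ha₀ ha₁.ne_top, toReal_lt_of_lt_ofReal (by simpa using ha₁),
      (ofReal_toReal ha₁.ne_top).symm⟩
  obtain ⟨q, hq₀, hq₁, rfl⟩ : ∃ q : ℝ, 0 < q ∧ q < 1 ∧ d = ENNReal.ofReal q :=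
    ⟨d.toReal, toReal_pos hd₀ hd₁.ne_top, toReal_lt_of_lt_ofReal (by simpa using hd₁),
      (ofReal_toReal hd₁.ne_top).symm⟩
  rw [binCrossEntropy_ofReal hp₀.le hp₁.le hp₀ hp₁,
    binCrossEntropy_ofReal hp₀.le hp₁.le hq₀ hq₁]
  exact ENNReal.ofReal_le_ofReal
    (Real.binEntropy_le_mul_log_inv_add_mul_log_inv hp₀.le hp₁.le hq₀ hq₁)

namespace MeasureTheory.Measure

variable {Ω : Type*} [MeasurableSpace Ω] (μ ν : Measure Ω) [SigmaFinite μ] [SigmaFinite ν]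

lemma rnDeriv_self_add_add_rnDeriv_add_self_eq_one :
    ∀ᵐ x ∂(μ + ν), μ.rnDeriv (μ + ν) x + ν.rnDeriv (μ + ν) x = 1 := by
  filter_upwards [(rnDeriv_add' μ ν (μ + ν)).symm, rnDeriv_self (μ + ν)] with x hsum hone
  exact hsum.trans hone

lemma rnDeriv_self_add_le_one : ∀ᵐ x ∂(μ + ν), μ.rnDeriv (μ + ν) x ≤ 1 := by
  filter_upwards [rnDeriv_self_add_add_rnDeriv_add_self_eq_one μ ν] with x hx
  exact hx ▸ le_self_add

lemma rnDeriv_add_self_ae_eq_one_sub :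
    ν.rnDeriv (μ + ν) =ᵐ[μ + ν] fun x ↦ 1 - μ.rnDeriv (μ + ν) x := by
  filter_upwards [rnDeriv_self_add_add_rnDeriv_add_self_eq_one μ ν, rnDeriv_lt_top μ (μ + ν)]
    with x hx hfin
  exact ENNReal.eq_sub_of_add_eq hfin.ne (by rw [add_comm, hx])

end MeasureTheory.Measure

open Measure in
lemma lintegral_negLog_add_lintegral_negLog_one_sub {Ω : Type*} [MeasurableSpace Ω]
    (P Q : Measure Ω) [SigmaFinite P] [SigmaFinite Q] {D : Ω → ℝ≥0∞} (hD : Measurable D) :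
    ∫⁻ x, negLog (D x) ∂P + ∫⁻ x, negLog (1 - D x) ∂Q
      = ∫⁻ x, binCrossEntropy (P.rnDeriv (P + Q) x) (D x) ∂(P + Q) := by
  have hP : P ≪ P + Q := AbsolutelyContinuous.rfl.add_right Q
  have hQ : Q ≪ P + Q := AbsolutelyContinuous.rfl.add_right' P
  rw [← lintegral_rnDeriv_mul hP (by fun_prop), ← lintegral_rnDeriv_mul hQ (by fun_prop),
    ← lintegral_add_left (by fun_prop)]
  refine lintegral_congr_ae ?_
  filter_upwards [rnDeriv_add_self_ae_eq_one_sub P Q] with x hx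
  rw [binCrossEntropy, hx]

theorem rnDeriv_minimizes_discriminator_loss_general
    {Ω : Type*} [MeasurableSpace Ω] (P Q : Measure Ω)
    [IsProbabilityMeasure P] [IsProbabilityMeasure Q]
    (D : Ω → ℝ≥0∞) (hD : Measurable D) :
    ∫⁻ x, negLog (P.rnDeriv (P + Q) x) ∂P
        + ∫⁻ x, negLog (1 - P.rnDeriv (P + Q) x) ∂Q
      ≤ ∫⁻ x, negLog (D x) ∂P + ∫⁻ x, negLog (1 - D x) ∂Q := by
  rw [lintegral_negLog_add_lintegral_negLog_one_sub P Q (Measure.measurable_rnDeriv P _),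
    lintegral_negLog_add_lintegral_negLog_one_sub P Q hD]
  refine lintegral_mono_ae ?_
  filter_upwards [Measure.rnDeriv_self_add_le_one P Q] with x hx
  exact binCrossEntropy_self_le hx (D x)

/-- For probability measures `P`, `Q`, the discriminator `D* = dP/d(P+Q)` minimizes the
loss `L(D) = ∫ (-log D) dP + ∫ (-log (1-D)) dQ` over all measurable `D : Ω → [0,1]`. -/
theorem rnDeriv_minimizes_discriminator_loss
    {Ω : Type*} [MeasurableSpace Ω] (P Q : Measure Ω)
    [IsProbabilityMeasure P] [IsProbabilityMeasure Q]
    (D : Ω → ℝ≥0∞) (hD : Measurable D) (hD1 : ∀ x, D x ≤ 1) :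
    ∫⁻ x, negLog (P.rnDeriv (P + Q) x) ∂P
        + ∫⁻ x, negLog (1 - P.rnDeriv (P + Q) x) ∂Q
      ≤ ∫⁻ x, negLog (D x) ∂P + ∫⁻ x, negLog (1 - D x) ∂Q :=
  rnDeriv_minimizes_discriminator_loss_general P Q D hD
end

section
/- Let P and Q be probability measures on a measurable space Ω, let M = (1/2)(P + Q), and let f = dP/d(P+Q). Then ∫ (−log f) dP + ∫ (−log(1−f)) dQ = log 4 − KL(P‖M) − KL(Q‖M), where KL denotes Kullback–Leibler divergence; equivalently, the discriminator loss evaluated at the optimal discriminator f equals log 4 − 2 · D_JS(P‖Q), where D_JS(P‖Q) = (1/2) KL(P‖M) + (1/2) KL(Q‖M) is the Jensen–Shannon divergence. -/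
open MeasureTheory ENNReal

/-- Kullback–Leibler divergence `KL(P‖M) = ∫ log (dP/dM) dP` (here `P ≪ M` and the
divergence is finite, so a real-valued Bochner integral suffices). -/
noncomputable def klReal {Ω : Type*} [MeasurableSpace Ω] (P M : Measure Ω) : ℝ :=
  ∫ x, Real.log ((P.rnDeriv M x).toReal) ∂P

/-! With `ν = P + Q`, the densities `dP/dν` and `dQ/dν` lie in `[0, 1]` and add up to `1`, so
the loss is `-∫ log (dP/dν) dP - ∫ log (dQ/dν) dQ`. Both integrals are finite because
`t log t` is bounded on `[0, 1]`, and passing from `ν` to `M = ν / 2` shifts each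
log-likelihood ratio by `log 2`, which accounts for the constant `log 4`. -/

lemma negLog_of_ne_zero {x : ℝ≥0∞} (hx : x ≠ 0) :
    negLog x = ENNReal.ofReal (-Real.log x.toReal) :=
  if_neg hx

lemma Real.abs_mul_log_le_one {t : ℝ} (h0 : 0 ≤ t) (h1 : t ≤ 1) : |t * Real.log t| ≤ 1 := by
  rcases h0.eq_or_lt with rfl | hpos
  · simp
  · rw [mul_comm]
    exact (Real.abs_log_mul_self_lt t hpos h1).le

section

variable {Ω : Type*} [MeasurableSpace Ω] {μ ν : Measure Ω}

lemma llr_nonpos_of_le [SigmaFinite ν] (hle : μ ≤ ν) : ∀ᵐ x ∂μ, llr μ ν x ≤ 0 := by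
  filter_upwards [hle.absolutelyContinuous.ae_le (Measure.rnDeriv_le_one_of_le hle)] with x hx
  exact Real.log_nonpos toReal_nonneg (toReal_le_of_le_ofReal zero_le_one (by simpa using hx))

lemma integrable_llr_of_le [IsFiniteMeasure μ] [IsFiniteMeasure ν] (hle : μ ≤ ν) :
    Integrable (llr μ ν) μ := by
  refine (integrable_rnDeriv_mul_log_iff hle.absolutelyContinuous).1 <|
    .of_bound (by fun_prop) 1 ?_
  filter_upwards [Measure.rnDeriv_le_one_of_le hle] with x hx
  exact Real.abs_mul_log_le_one toReal_nonneg
    (toReal_le_of_le_ofReal zero_le_one (by simpa using hx))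

lemma lintegral_negLog_rnDeriv_of_le [IsFiniteMeasure μ] [IsFiniteMeasure ν] (hle : μ ≤ ν) :
    ∫⁻ x, negLog (μ.rnDeriv ν x) ∂μ = ENNReal.ofReal (-∫ x, llr μ ν x ∂μ) := by
  rw [← integral_neg, ofReal_integral_eq_lintegral_ofReal (integrable_llr_of_le hle).fun_neg
    (by filter_upwards [llr_nonpos_of_le hle] with x hx using by simpa using hx)]
  refine lintegral_congr_ae ?_
  filter_upwards [Measure.rnDeriv_pos hle.absolutelyContinuous] with x hx
  rw [negLog_of_ne_zero hx.ne', llr_def]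

lemma klReal_smul_right [IsProbabilityMeasure μ] [IsFiniteMeasure ν] (hμν : μ ≪ ν)
    (hint : Integrable (llr μ ν) μ) {c : ℝ≥0∞} (hc : c ≠ 0) (hc_ne_top : c ≠ ∞) :
    klReal μ (c • ν) = ∫ x, llr μ ν x ∂μ - Real.log c.toReal := by
  rw [klReal, ← llr_def, integral_congr_ae (llr_smul_right hμν c hc hc_ne_top),
    integral_sub hint (integrable_const _)]
  simp

lemma one_sub_rnDeriv_add_left (μ ν : Measure Ω) [SigmaFinite μ] [SigmaFinite ν] :
    ∀ᵐ x ∂(μ + ν), 1 - μ.rnDeriv (μ + ν) x = ν.rnDeriv (μ + ν) x := by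
  filter_upwards [μ.rnDeriv_add' ν (μ + ν), (μ + ν).rnDeriv_self,
    μ.rnDeriv_ne_top (μ + ν)] with x hadd hone hne_top
  rw [← hone, hadd, Pi.add_apply, ENNReal.add_sub_cancel_left hne_top]

end

/-- For probability measures `P`, `Q` with midpoint `M = (1/2)(P+Q)` and
`f = dP/d(P+Q)`, the discriminator loss at the optimal discriminator `f` equals
`log 4 - KL(P‖M) - KL(Q‖M)`; equivalently it equals `log 4 - 2·D_JS(P‖Q)` where
`D_JS(P‖Q) = (1/2) KL(P‖M) + (1/2) KL(Q‖M)` is the Jensen–Shannon divergence. -/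
theorem optimal_discriminator_loss_eq_log_four_sub_two_js
    {Ω : Type*} [MeasurableSpace Ω] (P Q : Measure Ω)
    [IsProbabilityMeasure P] [IsProbabilityMeasure Q]
    (M : Measure Ω) (hM : M = (2 : ℝ≥0∞)⁻¹ • (P + Q)) :
    ∫⁻ x, negLog (P.rnDeriv (P + Q) x) ∂P
        + ∫⁻ x, negLog (1 - P.rnDeriv (P + Q) x) ∂Q
      = ENNReal.ofReal (Real.log 4 - klReal P M - klReal Q M)
    ∧ ∫⁻ x, negLog (P.rnDeriv (P + Q) x) ∂P
        + ∫⁻ x, negLog (1 - P.rnDeriv (P + Q) x) ∂Q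
      = ENNReal.ofReal
          (Real.log 4 - 2 * ((1 / 2) * klReal P M + (1 / 2) * klReal Q M)) := by
  subst hM
  have hP : P ≤ P + Q := Measure.le_add_right le_rfl
  have hQ : Q ≤ P + Q := Measure.le_add_left le_rfl
  have hQloss : ∫⁻ x, negLog (1 - P.rnDeriv (P + Q) x) ∂Q
      = ∫⁻ x, negLog (Q.rnDeriv (P + Q) x) ∂Q :=
    lintegral_congr_ae <| hQ.absolutelyContinuous.ae_le <|
      (one_sub_rnDeriv_add_left P Q).mono fun _ hx ↦ congrArg negLog hx
  have hlog4 : Real.log 4 = 2 * Real.log 2 := by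
    rw [show (4 : ℝ) = 2 ^ 2 by norm_num, Real.log_pow, Nat.cast_ofNat]
  have hloss : ∫⁻ x, negLog (P.rnDeriv (P + Q) x) ∂P
        + ∫⁻ x, negLog (1 - P.rnDeriv (P + Q) x) ∂Q
      = ENNReal.ofReal (Real.log 4 - klReal P ((2 : ℝ≥0∞)⁻¹ • (P + Q))
          - klReal Q ((2 : ℝ≥0∞)⁻¹ • (P + Q))) := by
    rw [hQloss, lintegral_negLog_rnDeriv_of_le hP, lintegral_negLog_rnDeriv_of_le hQ,
      ← ofReal_add (neg_nonneg.2 (integral_nonpos_of_ae (llr_nonpos_of_le hP)))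
        (neg_nonneg.2 (integral_nonpos_of_ae (llr_nonpos_of_le hQ))),
      klReal_smul_right hP.absolutelyContinuous (integrable_llr_of_le hP) (by simp) (by simp),
      klReal_smul_right hQ.absolutelyContinuous (integrable_llr_of_le hQ) (by simp) (by simp)]
    simp only [toReal_inv, Real.log_inv, toReal_ofNat, hlog4]
    ring_nf
  exact ⟨hloss, by rw [hloss]; ring_nf⟩
end

section
/- (Theorem 1, adversarial Z loss fixed point.) Let μ be a Borel probability measure on ℝ^{d_Z}, and let G : ℝ^{d_Z} → ℝ^{d_X} and E : ℝ^{d_X} → ℝ^{d_Z} be Borel measurable. If the pushforward of μ under z ↦ (G(z), z) equals the pushforward of μ under z ↦ (G(z), E(G(z))) as measures on ℝ^{d_X} × ℝ^{d_Z}, then E(G(z)) = z for μ-almost every z; that is, E ∘ G = id_{ℝ^{d_Z}} μ-almost everywhere. -/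
open MeasureTheory

/-- The event `{w p.1 = p.2}` is sure under the law of `(u, w ∘ u)`, hence almost sure under the
equal law of `(u, v)`. -/
theorem ae_eq_comp_of_map_prodMk_eq {α β γ : Type*} [MeasurableSpace α] [MeasurableSpace β]
    [MeasurableSpace γ] [MeasurableEq γ] {μ : Measure α} {u : α → β} {v : α → γ} {w : β → γ}
    (hu : Measurable u) (hv : Measurable v) (hw : Measurable w)
    (h : μ.map (fun a => (u a, v a)) = μ.map (fun a => (u a, w (u a)))) :
    ∀ᵐ a ∂μ, w (u a) = v a := by
  have hS : MeasurableSet {p : β × γ | w p.1 = p.2} :=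
    measurableSet_eq_fun (hw.comp measurable_fst) measurable_snd
  have hsure : ∀ᵐ p ∂μ.map (fun a => (u a, w (u a))), w p.1 = p.2 :=
    (ae_map_iff (hu.prodMk (hw.comp hu)).aemeasurable hS).2 (.of_forall fun _ => rfl)
  rw [← h] at hsure
  exact ae_of_ae_map (hu.prodMk hv).aemeasurable hsure

theorem adversarial_Z_fixed_point_general
    (dZ dX : ℕ) (μ : Measure (EuclideanSpace ℝ (Fin dZ)))
    (G : EuclideanSpace ℝ (Fin dZ) → EuclideanSpace ℝ (Fin dX))
    (E : EuclideanSpace ℝ (Fin dX) → EuclideanSpace ℝ (Fin dZ))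
    (hG : Measurable G) (hE : Measurable E)
    (h : μ.map (fun z => (G z, z)) = μ.map (fun z => (G z, E (G z)))) :
    ∀ᵐ z ∂μ, E (G z) = z :=
  ae_eq_comp_of_map_prodMk_eq hG measurable_id hE h

/-- Theorem 1 (adversarial Z loss fixed point): if the law of `(G(Z), Z)` equals the law
of `(G(Z), E(G(Z)))` for `Z ∼ μ`, then `E ∘ G = id` `μ`-almost everywhere. -/
theorem adversarial_Z_fixed_point
    (dZ dX : ℕ) (μ : Measure (EuclideanSpace ℝ (Fin dZ))) [IsProbabilityMeasure μ]
    (G : EuclideanSpace ℝ (Fin dZ) → EuclideanSpace ℝ (Fin dX))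
    (E : EuclideanSpace ℝ (Fin dX) → EuclideanSpace ℝ (Fin dZ))
    (hG : Measurable G) (hE : Measurable E)
    (h : μ.map (fun z => (G z, z)) = μ.map (fun z => (G z, E (G z)))) :
    ∀ᵐ z ∂μ, E (G z) = z :=
  adversarial_Z_fixed_point_general dZ dX μ G E hG hE h
end

section
/- (Theorem 2, adversarial X loss fixed point.) Let μ be a Borel probability measure on ℝ^{d_Z}, and let G : ℝ^{d_Z} → ℝ^{d_X} and E : ℝ^{d_X} → ℝ^{d_Z} be Borel measurable. If the pushforward of μ under z ↦ (z, G(z)) equals the pushforward of μ under z ↦ (z, G(E(G(z)))) as measures on ℝ^{d_Z} × ℝ^{d_X}, then G(E(G(z))) = G(z) for μ-almost every z; equivalently, G(E(x)) = x for almost every x with respect to the pushforward measure P_G = G_*μ, i.e. G ∘ E = id_{ℝ^{d_X}} P_G-almost everywhere. -/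
open MeasureTheory

/-- The complement of the graph of `f` is null for the graph measure of `f`, hence for that of `g`,
and its preimage under `a ↦ (a, g a)` is the set where `f` and `g` differ. -/
theorem ae_eq_of_map_prodMk_eq {α β : Type*} [MeasurableSpace α] [MeasurableSpace β]
    [MeasurableEq β] {μ : Measure α} {f g : α → β} (hf : Measurable f) (hg : Measurable g)
    (h : μ.map (fun a => (a, f a)) = μ.map (fun a => (a, g a))) : f =ᵐ[μ] g := by
  have hgraph : MeasurableSet {p : α × β | p.2 = f p.1}ᶜ :=
    (measurableSet_eq_fun measurable_snd (hf.comp measurable_fst)).compl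
  have hnull : μ.map (fun a => (a, f a)) {p : α × β | p.2 = f p.1}ᶜ = 0 := by
    rw [Measure.map_apply (by fun_prop : Measurable fun a => (a, f a)) hgraph]
    simp
  rw [h, Measure.map_apply (by fun_prop : Measurable fun a => (a, g a)) hgraph] at hnull
  exact measure_mono_null (fun a ha => Ne.symm ha) hnull

theorem adversarial_X_fixed_point_general
    (dZ dX : ℕ) (μ : Measure (EuclideanSpace ℝ (Fin dZ)))
    (G : EuclideanSpace ℝ (Fin dZ) → EuclideanSpace ℝ (Fin dX))
    (E : EuclideanSpace ℝ (Fin dX) → EuclideanSpace ℝ (Fin dZ))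
    (hG : Measurable G) (hE : Measurable E)
    (h : μ.map (fun z => (z, G z)) = μ.map (fun z => (z, G (E (G z))))) :
    (∀ᵐ z ∂μ, G (E (G z)) = G z) ∧ ∀ᵐ x ∂(μ.map G), G (E x) = x := by
  have hfix : ∀ᵐ z ∂μ, G (E (G z)) = G z :=
    (ae_eq_of_map_prodMk_eq hG (hG.comp (hE.comp hG)) h).symm
  have hfixed_set : MeasurableSet {x | G (E x) = x} :=
    measurableSet_eq_fun (hG.comp hE) measurable_id
  exact ⟨hfix, (ae_map_iff hG.aemeasurable hfixed_set).2 hfix⟩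

/-- Theorem 2 (adversarial X loss fixed point): if the law of `(Z, G(Z))` equals the law
of `(Z, G(E(G(Z))))` for `Z ∼ μ`, then `G(E(G(z))) = G(z)` for `μ`-a.e. `z`; equivalently,
`G ∘ E = id` almost everywhere with respect to the model distribution `P_G = G_* μ`. -/
theorem adversarial_X_fixed_point
    (dZ dX : ℕ) (μ : Measure (EuclideanSpace ℝ (Fin dZ))) [IsProbabilityMeasure μ]
    (G : EuclideanSpace ℝ (Fin dZ) → EuclideanSpace ℝ (Fin dX))
    (E : EuclideanSpace ℝ (Fin dX) → EuclideanSpace ℝ (Fin dZ))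
    (hG : Measurable G) (hE : Measurable E)
    (h : μ.map (fun z => (z, G z)) = μ.map (fun z => (z, G (E (G z))))) :
    (∀ᵐ z ∂μ, G (E (G z)) = G z) ∧ ∀ᵐ x ∂(μ.map G), G (E x) = x :=
  adversarial_X_fixed_point_general dZ dX μ G E hG hE h
end
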